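/- arXiv:1405.6734 — 2 statements merged into one kernel-verified Lean document; each statement's English description precedes it below -/
import Mathlib

section
/- For every nonzero t ∈ ℂ, the vector w₂ = e_1² v + t e_2 v is a singular vector (e_{-1} w₂ = e_{-2} w₂ = 0) in the Verma module V(h(t), c(t)) with c(t) = 13 + 6t + 6t^{-1} and h(t) = -(3/4)t - 1/2. -/
/-!
Everything reduces to commuting the lowering operators `e₋₁, e₋₂` past `e₁, e₂` with the
Virasoro relations: for a highest weight vector `v` of weight `h` and central charge `c`,
`e₋₁ (e₁² v + t e₂ v) = (4h + 2 + 3t) e₁ v` and `e₋₂ (e₁² v + t e₂ v) = (6h + t(4h + c/2)) v`.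
Both scalars vanish for `h = -(3/4)t - 1/2`, `c = 13 + 6t + 6t⁻¹`.
-/

def IsVirasoroRep {M : Type*} [AddCommGroup M] [Module ℂ M] (e : ℤ → M →ₗ[ℂ] M) (c : ℂ) : Prop :=
  ∀ i j : ℤ, ∀ m : M,
    e i (e j m) - e j (e i m) =
      ((j : ℂ) - (i : ℂ)) • e (i + j) m +
        (if i + j = 0 then (((j : ℂ) ^ 3 - (j : ℂ)) / 12) * c else 0) • m

def IsHighestWeightVector {M : Type*} [AddCommGroup M] [Module ℂ M] (e : ℤ → M →ₗ[ℂ] M)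
    (h : ℂ) (v : M) : Prop :=
  e 0 v = h • v ∧ ∀ i : ℤ, i < 0 → e i v = 0

namespace IsVirasoroRep

variable {M : Type*} [AddCommGroup M] [Module ℂ M] {e : ℤ → M →ₗ[ℂ] M} {c h : ℂ} {v : M}

theorem e_neg_one_e_one (he : IsVirasoroRep e c) (hv : IsHighestWeightVector e h v) :
    e (-1) (e 1 v) = (2 * h) • v := by
  have H := he (-1) 1 v
  norm_num [hv.2 (-1) (by norm_num), hv.1, smul_smul] at H
  exact H

theorem e_zero_e_one (he : IsVirasoroRep e c) (hv : IsHighestWeightVector e h v) :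
    e 0 (e 1 v) = (h + 1) • e 1 v := by
  have H := he 0 1 v
  norm_num [hv.1] at H
  rw [sub_eq_iff_eq_add] at H
  rw [H]
  module

theorem e_neg_one_e_one_e_one (he : IsVirasoroRep e c) (hv : IsHighestWeightVector e h v) :
    e (-1) (e 1 (e 1 v)) = (4 * h + 2) • e 1 v := by
  have H := he (-1) 1 (e 1 v)
  norm_num [he.e_neg_one_e_one hv, he.e_zero_e_one hv] at H
  rw [sub_eq_iff_eq_add] at H
  rw [H]
  module

theorem e_neg_one_e_two (he : IsVirasoroRep e c) (hv : IsHighestWeightVector e h v) :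
    e (-1) (e 2 v) = (3 : ℂ) • e 1 v := by
  have H := he (-1) 2 v
  norm_num [hv.2 (-1) (by norm_num)] at H
  exact H

theorem e_neg_two_e_one (he : IsVirasoroRep e c) (hv : IsHighestWeightVector e h v) :
    e (-2) (e 1 v) = 0 := by
  have H := he (-2) 1 v
  norm_num [hv.2 (-1) (by norm_num), hv.2 (-2) (by norm_num)] at H
  exact H

theorem e_neg_two_e_one_e_one (he : IsVirasoroRep e c) (hv : IsHighestWeightVector e h v) :
    e (-2) (e 1 (e 1 v)) = (6 * h) • v := by
  have H := he (-2) 1 (e 1 v)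
  norm_num [he.e_neg_two_e_one hv, he.e_neg_one_e_one hv] at H
  rw [H]
  module

theorem e_neg_two_e_two (he : IsVirasoroRep e c) (hv : IsHighestWeightVector e h v) :
    e (-2) (e 2 v) = (4 * h + c / 2) • v := by
  have H := he (-2) 2 v
  norm_num [hv.2 (-2) (by norm_num), hv.1] at H
  rw [H]
  module

theorem e_neg_one_level_two (he : IsVirasoroRep e c) (hv : IsHighestWeightVector e h v) (t : ℂ) :
    e (-1) (e 1 (e 1 v) + t • e 2 v) = (4 * h + 2 + 3 * t) • e 1 v := by
  rw [map_add, map_smul, he.e_neg_one_e_one_e_one hv, he.e_neg_one_e_two hv, smul_smul,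
    ← add_smul]
  ring_nf

theorem e_neg_two_level_two (he : IsVirasoroRep e c) (hv : IsHighestWeightVector e h v) (t : ℂ) :
    e (-2) (e 1 (e 1 v) + t • e 2 v) = (6 * h + t * (4 * h + c / 2)) • v := by
  rw [map_add, map_smul, he.e_neg_two_e_one_e_one hv, he.e_neg_two_e_two hv, smul_smul,
    ← add_smul]

end IsVirasoroRep

/-- For every nonzero `t ∈ ℂ`, the vector `w₂ = e₁² v + t e₂ v` is a singular vector in the
Verma module `V(h(t), c(t))` with `c(t) = 13 + 6t + 6t⁻¹` and `h(t) = -(3/4)t - 1/2`. -/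
theorem level_two_singular_vector
    (t : ℂ) (ht : t ≠ 0)
    (M : Type*) [AddCommGroup M] [Module ℂ M]
    (e : ℤ → M →ₗ[ℂ] M) (v : M)
    (hrel : ∀ i j : ℤ, ∀ m : M,
      e i (e j m) - e j (e i m) =
        ((j : ℂ) - (i : ℂ)) • e (i + j) m +
          (if i + j = 0 then (((j : ℂ) ^ 3 - (j : ℂ)) / 12) * (13 + 6*t + 6*t⁻¹) else 0) • m)
    (hv0 : e 0 v = (-(3/4)*t - 1/2) • v)
    (hvneg : ∀ i : ℤ, i < 0 → e i v = 0) :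
    e (-1) (e 1 (e 1 v) + t • e 2 v) = 0 ∧ e (-2) (e 1 (e 1 v) + t • e 2 v) = 0 := by
  have he : IsVirasoroRep e (13 + 6*t + 6*t⁻¹) := hrel
  have hv : IsHighestWeightVector e (-(3/4)*t - 1/2) v := ⟨hv0, hvneg⟩
  rw [he.e_neg_one_level_two hv, he.e_neg_two_level_two hv]
  have h₁ : 4 * (-(3/4)*t - 1/2) + 2 + 3 * t = 0 := by ring
  have h₂ : 6 * (-(3/4)*t - 1/2) + t * (4 * (-(3/4)*t - 1/2) + (13 + 6*t + 6*t⁻¹) / 2) = 0 := by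
    field_simp
    ring
  rw [h₁, h₂]
  exact ⟨zero_smul _ _, zero_smul _ _⟩
end

section
/- With the vectors v^{(k)} defined recursively as v^{(0)} = v and v^{(k)} = (2t Σ_{j=1}^{k} ((j-1)(2t-1) + 2k - 2p - 1) e_j v^{(k-j)}) / (k(2p-k)(k-p-t)) in the Verma module V(h,c) with c = 13 + 6t + 6t^{-1} and h = -((p-1+t)(t^{-1}(p+1)+3))/4, one has e_{-2} v^{(1)} = 0 and e_{-2} v^{(k)} = -(p + 4 - k + 5t) v^{(k-2)} for k = 2, ..., 2p-1. -/
/-!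
Induct on `k`, proving simultaneously `e₀ v⁽ᵏ⁾ = (h + k) v⁽ᵏ⁾` and `e₋ₐ v⁽ᵏ⁾ = λ_a(k) v⁽ᵏ⁻ᵃ⁾` for
`a = 1, 2`, where `λ_a(k) = k - p - 2a - (2a+1)t` and the right side is `0` when `k < a`.
Commuting `e₋ₐ` past the `e_j` in the recursion for `v⁽ᵏ⁾`, whose coefficients are
`C_{j,k} = (j-1)(2t-1) + 2k - 2p - 1`, the terms with `j > a` recombine by the identity
`C_{j,k} λ_a(k - j) + (j + 2a) C_{j+a,k} = (k - p + a - (2a+1)t) C_{j,k-a}` into a multiple of the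
sum defining `v⁽ᵏ⁻ᵃ⁾`. The remaining terms `j ≤ a` involve only `e₀`, `e₋₁` and the central charge,
and the values of `h` and `c` make the total collapse to `λ_a(k) v⁽ᵏ⁻ᵃ⁾`.
-/

open Finset

section

variable {M : Type*} [AddCommGroup M] [Module ℂ M]

def IsVirasoroAction (c : ℂ) (e : ℤ → M →ₗ[ℂ] M) : Prop :=
  ∀ i j : ℤ, ∀ m : M, e i (e j m) - e j (e i m) =
    ((j : ℂ) - (i : ℂ)) • e (i + j) m +
      (if i + j = 0 then (((j : ℂ) ^ 3 - (j : ℂ)) / 12) * c else 0) • m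

namespace IsVirasoroAction

variable {c : ℂ} {e : ℤ → M →ₗ[ℂ] M}

theorem comm_of_add_ne_zero (he : IsVirasoroAction c e) {i j : ℤ} (hij : i + j ≠ 0) (m : M) :
    e i (e j m) - e j (e i m) = ((j : ℂ) - i) • e (i + j) m := by
  rw [he, if_neg hij, zero_smul, add_zero]

theorem e_zero_comm (he : IsVirasoroAction c e) (j : ℤ) (m : M) :
    e 0 (e j m) = e j (e 0 m) + (j : ℂ) • e j m := by
  rcases eq_or_ne j 0 with rfl | hj
  · simp
  · rw [← sub_eq_iff_eq_add', he.comm_of_add_ne_zero (by simpa using hj)]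
    simp

theorem e_neg_one_comm_e_one (he : IsVirasoroAction c e) (m : M) :
    e (-1) (e 1 m) - e 1 (e (-1) m) = (2 : ℂ) • e 0 m := by
  rw [he]
  norm_num

theorem e_neg_two_comm_e_one (he : IsVirasoroAction c e) (m : M) :
    e (-2) (e 1 m) - e 1 (e (-2) m) = (3 : ℂ) • e (-1) m := by
  rw [he.comm_of_add_ne_zero (by norm_num)]
  norm_num

theorem e_neg_two_comm_e_two (he : IsVirasoroAction c e) (m : M) :
    e (-2) (e 2 m) - e 2 (e (-2) m) = (4 : ℂ) • e 0 m + (c / 2) • m := by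
  rw [he]
  norm_num
  module

end IsVirasoroAction

section Sequence

variable (p : ℕ) (t : ℂ)

def vseqCoeff (j k : ℕ) : ℂ := ((j : ℂ) - 1) * (2*t - 1) + 2*(k : ℂ) - 2*(p : ℂ) - 1

def vseqDenom (k : ℕ) : ℂ := (k : ℂ) * (2*(p : ℂ) - (k : ℂ)) * ((k : ℂ) - (p : ℂ) - t)

def vseqLowerCoeff (a k : ℕ) : ℂ := (k : ℂ) - p - 2 * a - (2 * a + 1) * t

noncomputable def vermaWeight : ℂ := -(((p : ℂ) - 1 + t) * (t⁻¹ * ((p : ℂ) + 1) + 3)) / 4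

def vseqSum (e : ℤ → M →ₗ[ℂ] M) (w : ℕ → M) (k : ℕ) : M :=
  ∑ j ∈ Icc 1 k, vseqCoeff p t j k • e (j : ℤ) (w (k - j))

theorem vseqSum_eq_sum_range (e : ℤ → M →ₗ[ℂ] M) (w : ℕ → M) (k : ℕ) :
    vseqSum p t e w k =
      ∑ i ∈ range k, vseqCoeff p t (i + 1) k • e ((i + 1 : ℕ) : ℤ) (w (k - (i + 1))) := by
  rw [range_eq_Ico, sum_Ico_add' (fun j => vseqCoeff p t j k • e (j : ℤ) (w (k - j))),
    zero_add, Ico_add_one_right_eq_Icc, vseqSum]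

theorem vseqCoeff_lower_add (a k i : ℕ) (h : i + 1 + a ≤ k) :
    vseqCoeff p t (i + 1) k * vseqLowerCoeff p t a (k - (i + 1)) +
        vseqCoeff p t (a + i + 1) k * (((a + i + 1 : ℕ) : ℂ) + a) =
      ((k : ℂ) - p + a - (2 * a + 1) * t) * vseqCoeff p t (i + 1) (k - a) := by
  simp only [vseqCoeff, vseqLowerCoeff]
  push_cast [Nat.cast_sub (by omega : i + 1 ≤ k), Nat.cast_sub (by omega : a ≤ k)]
  ring

variable {p t} {c : ℂ} {e : ℤ → M →ₗ[ℂ] M} {w : ℕ → M}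

theorem e_zero_vseqSum (he : IsVirasoroAction c e) {h : ℂ} {k : ℕ}
    (hw : ∀ m < k, e 0 (w m) = (h + m) • w m) :
    e 0 (vseqSum p t e w k) = (h + k) • vseqSum p t e w k := by
  rw [vseqSum, map_sum, smul_sum]
  refine sum_congr rfl fun j hj => ?_
  obtain ⟨hj1, hjk⟩ := mem_Icc.1 hj
  rw [map_smul, he.e_zero_comm, hw _ (by omega), map_smul, ← add_smul, smul_comm,
    Nat.cast_sub hjk]
  module

theorem sum_smul_e_of_lowering {a k : ℕ} (f l : ℕ → ℂ)
    (hw : ∀ m < k, e (-(a : ℤ)) (w m) = if a ≤ m then l m • w (m - a) else 0) :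
    ∑ i ∈ range k, f i • e ((i + 1 : ℕ) : ℤ) (e (-(a : ℤ)) (w (k - (i + 1)))) =
      ∑ i ∈ range (k - a), (f i * l (k - (i + 1))) • e ((i + 1 : ℕ) : ℤ) (w (k - a - (i + 1))) := by
  rw [← sum_subset (range_mono (Nat.sub_le k a))]
  · refine sum_congr rfl fun i hi => ?_
    have hi := mem_range.1 hi
    rw [hw _ (by omega), if_pos (by omega), map_smul, smul_smul,
      show k - (i + 1) - a = k - a - (i + 1) by omega]
  · intro i hik hi
    rw [mem_range] at hik hi
    rw [hw _ (by omega), if_neg (by omega), map_zero, smul_zero]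

theorem sum_smul_commutator_split (he : IsVirasoroAction c e) {a k : ℕ} (hak : a ≤ k) (f : ℕ → ℂ) :
    ∑ i ∈ range k, f i • (e (-(a : ℤ)) (e ((i + 1 : ℕ) : ℤ) (w (k - (i + 1)))) -
        e ((i + 1 : ℕ) : ℤ) (e (-(a : ℤ)) (w (k - (i + 1))))) =
      ∑ i ∈ range a, f i • (e (-(a : ℤ)) (e ((i + 1 : ℕ) : ℤ) (w (k - (i + 1)))) -
        e ((i + 1 : ℕ) : ℤ) (e (-(a : ℤ)) (w (k - (i + 1))))) +
      ∑ i ∈ range (k - a), (f (a + i) * (((a + i + 1 : ℕ) : ℂ) + a)) •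
        e ((i + 1 : ℕ) : ℤ) (w (k - a - (i + 1))) := by
  obtain ⟨m, rfl⟩ := Nat.exists_eq_add_of_le hak
  rw [sum_range_add, Nat.add_sub_cancel_left]
  congr 1
  refine sum_congr rfl fun i _ => ?_
  rw [he.comm_of_add_ne_zero (by omega), smul_smul,
    show -(a : ℤ) + ((a + i + 1 : ℕ) : ℤ) = ((i + 1 : ℕ) : ℤ) by push_cast; ring,
    show a + m - (a + i + 1) = m - (i + 1) by omega]
  congr 2
  push_cast
  ring

theorem e_neg_vseqSum (he : IsVirasoroAction c e) {a k : ℕ} (hak : a ≤ k)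
    (hw : ∀ m < k, e (-(a : ℤ)) (w m) =
      if a ≤ m then vseqLowerCoeff p t a m • w (m - a) else 0) :
    e (-(a : ℤ)) (vseqSum p t e w k) =
      ((k : ℂ) - p + a - (2 * a + 1) * t) • vseqSum p t e w (k - a) +
      ∑ i ∈ range a, vseqCoeff p t (i + 1) k • (e (-(a : ℤ)) (e ((i + 1 : ℕ) : ℤ) (w (k - (i + 1)))) -
        e ((i + 1 : ℕ) : ℤ) (e (-(a : ℤ)) (w (k - (i + 1))))) := by
  have hsplit : e (-(a : ℤ)) (vseqSum p t e w k) =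
      ∑ i ∈ range k, vseqCoeff p t (i + 1) k •
        e ((i + 1 : ℕ) : ℤ) (e (-(a : ℤ)) (w (k - (i + 1)))) +
      ∑ i ∈ range k, vseqCoeff p t (i + 1) k • (e (-(a : ℤ)) (e ((i + 1 : ℕ) : ℤ) (w (k - (i + 1)))) -
        e ((i + 1 : ℕ) : ℤ) (e (-(a : ℤ)) (w (k - (i + 1))))) := by
    rw [vseqSum_eq_sum_range, map_sum, ← sum_add_distrib]
    refine sum_congr rfl fun i _ => ?_
    rw [map_smul, ← smul_add, add_sub_cancel]
  rw [hsplit, sum_smul_e_of_lowering _ _ hw, sum_smul_commutator_split he hak, add_left_comm,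
    ← sum_add_distrib, add_comm, vseqSum_eq_sum_range, smul_sum]
  congr 1
  refine sum_congr rfl fun i hi => ?_
  rw [← add_smul, smul_smul, vseqCoeff_lower_add p t a k i (by have := mem_range.1 hi; omega)]

theorem e_neg_one_vseqSum (he : IsVirasoroAction c e) {k : ℕ} (hk : 1 ≤ k)
    (hw : ∀ m < k, e (-1) (w m) = if 1 ≤ m then vseqLowerCoeff p t 1 m • w (m - 1) else 0) :
    e (-1) (vseqSum p t e w k) = ((k : ℂ) - p + 1 - 3 * t) • vseqSum p t e w (k - 1) +
      (2 * vseqCoeff p t 1 k) • e 0 (w (k - 1)) := by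
  have h := e_neg_vseqSum (a := 1) he hk (by simpa using hw)
  simp only [Nat.cast_one, zero_add, sum_range_one, he.e_neg_one_comm_e_one, smul_smul] at h
  rw [h]
  module

theorem e_neg_two_vseqSum (he : IsVirasoroAction c e) {k : ℕ} (hk : 2 ≤ k)
    (hw : ∀ m < k, e (-2) (w m) = if 2 ≤ m then vseqLowerCoeff p t 2 m • w (m - 2) else 0) :
    e (-2) (vseqSum p t e w k) = ((k : ℂ) - p + 2 - 5 * t) • vseqSum p t e w (k - 2) +
      (3 * vseqCoeff p t 1 k) • e (-1) (w (k - 1)) + (4 * vseqCoeff p t 2 k) • e 0 (w (k - 2)) +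
      (vseqCoeff p t 2 k * c / 2) • w (k - 2) := by
  have h := e_neg_vseqSum (a := 2) he hk (by simpa using hw)
  simp only [Nat.cast_one, Nat.cast_ofNat, sum_range_succ, sum_range_zero, zero_add, Nat.reduceAdd,
    he.e_neg_two_comm_e_one, he.e_neg_two_comm_e_two] at h
  rw [h]
  module

theorem vseqLowerCoeff_one_mul_vseqDenom (ht : t ≠ 0) (n : ℕ) :
    vseqLowerCoeff p t 1 (n + 1) * vseqDenom p t (n + 1) =
      ((n : ℂ) + 1 - p + 1 - 3 * t) * vseqDenom p t n +
        4 * t * vseqCoeff p t 1 (n + 1) * (vermaWeight p t + n) := by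
  simp only [vseqDenom, vseqCoeff, vseqLowerCoeff, vermaWeight]
  push_cast
  field_simp
  ring

theorem vseqLowerCoeff_two_mul_vseqDenom (ht : t ≠ 0) (n : ℕ) :
    vseqLowerCoeff p t 2 (n + 2) * vseqDenom p t (n + 2) =
      ((n : ℂ) + 2 - p + 2 - 5 * t) * vseqDenom p t n +
        2 * t * (3 * vseqCoeff p t 1 (n + 2) * vseqLowerCoeff p t 1 (n + 1) +
          4 * vseqCoeff p t 2 (n + 2) * (vermaWeight p t + n)) +
        -- `(2t + 3)(3t + 2) = t c`: the central term with `t⁻¹` cleared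
        vseqCoeff p t 2 (n + 2) * ((2 * t + 3) * (3 * t + 2)) := by
  simp only [vseqDenom, vseqCoeff, vseqLowerCoeff, vermaWeight]
  push_cast
  field_simp
  ring

theorem e_neg_one_vseq_succ (ht : t ≠ 0) (he : IsVirasoroAction c e) {n : ℕ}
    (hD : vseqDenom p t (n + 1) ≠ 0)
    (hwn : w (n + 1) = ((vseqDenom p t (n + 1))⁻¹ * (2 * t)) • vseqSum p t e w (n + 1))
    (hSn : vseqSum p t e w n = ((2 * t)⁻¹ * vseqDenom p t n) • w n)
    (h0 : e 0 (w n) = (vermaWeight p t + n) • w n)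
    (h1 : ∀ m < n + 1, e (-1) (w m) = if 1 ≤ m then vseqLowerCoeff p t 1 m • w (m - 1) else 0) :
    e (-1) (w (n + 1)) = vseqLowerCoeff p t 1 (n + 1) • w n := by
  rw [hwn, map_smul, e_neg_one_vseqSum he (by omega) h1, Nat.add_sub_cancel, hSn, h0]
  match_scalars
  field_simp
  linear_combination (vseqLowerCoeff_one_mul_vseqDenom ht n).symm

theorem e_neg_two_vseq_add_two (ht : t ≠ 0) (he : IsVirasoroAction (13 + 6 * t + 6 * t⁻¹) e)
    {n : ℕ} (hD : vseqDenom p t (n + 2) ≠ 0)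
    (hwn : w (n + 2) = ((vseqDenom p t (n + 2))⁻¹ * (2 * t)) • vseqSum p t e w (n + 2))
    (hSn : vseqSum p t e w n = ((2 * t)⁻¹ * vseqDenom p t n) • w n)
    (h0 : e 0 (w n) = (vermaWeight p t + n) • w n)
    (h1 : e (-1) (w (n + 1)) = vseqLowerCoeff p t 1 (n + 1) • w n)
    (h2 : ∀ m < n + 2, e (-2) (w m) = if 2 ≤ m then vseqLowerCoeff p t 2 m • w (m - 2) else 0) :
    e (-2) (w (n + 2)) = vseqLowerCoeff p t 2 (n + 2) • w n := by
  rw [hwn, map_smul, e_neg_two_vseqSum he (by omega) h2, Nat.add_sub_cancel,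
    show n + 2 - 1 = n + 1 by omega, hSn, h0, h1]
  match_scalars
  field_simp
  linear_combination (vseqLowerCoeff_two_mul_vseqDenom ht n).symm

theorem vseqDenom_ne_zero (htg : ∀ r : ℕ, 1 ≤ r → r ≤ 2 * p - 1 → t ≠ (p : ℂ) - (r : ℂ))
    {k : ℕ} (hk1 : 1 ≤ k) (hk : k ≤ 2 * p - 1) : vseqDenom p t k ≠ 0 := by
  have hk0 : (k : ℂ) ≠ 0 := Nat.cast_ne_zero.2 (by omega)
  have hpk : 2 * (p : ℂ) - k ≠ 0 := by
    rw [sub_ne_zero]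
    exact_mod_cast (by omega : 2 * p ≠ k)
  have hkt : (k : ℂ) - p - t ≠ 0 := by
    refine sub_ne_zero.2 fun h => htg (2 * p - k) (by omega) (by omega) ?_
    push_cast [Nat.cast_sub (by omega : k ≤ 2 * p)]
    linear_combination -h
  exact mul_ne_zero (mul_ne_zero hk0 hpk) hkt

theorem vseqSum_eq_smul_of_rec (ht : t ≠ 0) {k : ℕ} (hD : 1 ≤ k → vseqDenom p t k ≠ 0)
    (hw : 1 ≤ k → w k = ((vseqDenom p t k)⁻¹ * (2 * t)) • vseqSum p t e w k) :
    vseqSum p t e w k = ((2 * t)⁻¹ * vseqDenom p t k) • w k := by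
  rcases Nat.eq_zero_or_pos k with rfl | hk
  · simp [vseqSum, vseqDenom]
  · rw [hw hk, smul_smul, show (2 * t)⁻¹ * vseqDenom p t k * ((vseqDenom p t k)⁻¹ * (2 * t)) = 1 by
      field_simp [hD hk], one_smul]

theorem e_neg_two_vseq_one (he : IsVirasoroAction c e)
    (hw1 : w 1 = ((vseqDenom p t 1)⁻¹ * (2 * t)) • vseqSum p t e w 1)
    (hneg1 : e (-1) (w 0) = 0) (hneg2 : e (-2) (w 0) = 0) : e (-2) (w 1) = 0 := by
  have h := he.e_neg_two_comm_e_one (w 0)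
  rw [hneg1, hneg2, map_zero, sub_zero, smul_zero] at h
  simp [hw1, vseqSum, h]

theorem vseq_weight_and_lowering (ht : t ≠ 0)
    (hD : ∀ k, 1 ≤ k → k ≤ 2 * p - 1 → vseqDenom p t k ≠ 0)
    (he : IsVirasoroAction (13 + 6 * t + 6 * t⁻¹) e)
    (h0 : e 0 (w 0) = vermaWeight p t • w 0) (hneg1 : e (-1) (w 0) = 0) (hneg2 : e (-2) (w 0) = 0)
    (hrec : ∀ k, 1 ≤ k → k ≤ 2 * p - 1 →
      w k = ((vseqDenom p t k)⁻¹ * (2 * t)) • vseqSum p t e w k) :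
    ∀ k ≤ 2 * p - 1, e 0 (w k) = (vermaWeight p t + k) • w k ∧
      e (-1) (w k) = (if 1 ≤ k then vseqLowerCoeff p t 1 k • w (k - 1) else 0) ∧
      e (-2) (w k) = (if 2 ≤ k then vseqLowerCoeff p t 2 k • w (k - 2) else 0) := by
  intro k
  induction k using Nat.strong_induction_on with
  | _ k ih =>
  intro hk
  have hS : ∀ m ≤ k, vseqSum p t e w m = ((2 * t)⁻¹ * vseqDenom p t m) • w m := fun m hm =>
    vseqSum_eq_smul_of_rec ht (fun h1 => hD m h1 (by omega)) (fun h1 => hrec m h1 (by omega))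
  have ih0 := fun m hm => (ih m hm (by omega)).1
  have ih1 := fun m hm => (ih m hm (by omega)).2.1
  have ih2 := fun m hm => (ih m hm (by omega)).2.2
  rcases k with _ | n
  · simp [h0, hneg1, hneg2]
  have hwk := hrec (n + 1) (by omega) hk
  have hDk := hD (n + 1) (by omega) hk
  refine ⟨?_, ?_, ?_⟩
  · rw [hwk, map_smul, e_zero_vseqSum he ih0, smul_comm]
  · rw [if_pos (by omega), Nat.add_sub_cancel]
    exact e_neg_one_vseq_succ ht he hDk hwk (hS n (by omega)) (ih0 n (by omega)) ih1
  · rcases n with _ | n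
    · rw [if_neg (by omega)]
      exact e_neg_two_vseq_one he hwk hneg1 hneg2
    · have h1 := ih1 (n + 1) (by omega)
      rw [if_pos (by omega), Nat.add_sub_cancel] at h1
      rw [if_pos (by omega), show n + 1 + 1 - 2 = n by omega]
      exact e_neg_two_vseq_add_two ht he hDk hwk (hS n (by omega)) (ih0 n (by omega)) h1 ih2

end Sequence

end

/-- With `v⁽⁰⁾ = v` and
`v⁽ᵏ⁾ = (2t Σ_{j=1}^{k} ((j-1)(2t-1) + 2k - 2p - 1) e_j v⁽ᵏ⁻ʲ⁾) / (k(2p-k)(k-p-t))`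
for `1 ≤ k ≤ 2p-1`, in the Verma module `V(h,c)` with `c = 13 + 6t + 6t⁻¹` and
`h = -((p-1+t)(t⁻¹(p+1)+3))/4`, one has `e₋₂ v⁽¹⁾ = 0` and `e₋₂ v⁽ᵏ⁾ = -(p+4-k+5t) v⁽ᵏ⁻²⁾` for `k = 2, …, 2p-1`. -/
theorem e_neg_two_on_vseq
    (p : ℕ) (hp : 0 < p) (t : ℂ) (ht : t ≠ 0)
    (htg : ∀ r : ℕ, 1 ≤ r → r ≤ 2*p - 1 → t ≠ (p : ℂ) - (r : ℂ))
    (M : Type*) [AddCommGroup M] [Module ℂ M]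
    (e : ℤ → M →ₗ[ℂ] M) (v : M)
    (hrel : ∀ i j : ℤ, ∀ m : M,
      e i (e j m) - e j (e i m) =
        ((j : ℂ) - (i : ℂ)) • e (i + j) m +
          (if i + j = 0 then (((j : ℂ) ^ 3 - (j : ℂ)) / 12) * (13 + 6*t + 6*t⁻¹) else 0) • m)
    (hv0 : e 0 v = (-(((p : ℂ) - 1 + t) * (t⁻¹ * ((p : ℂ) + 1) + 3)) / 4) • v)
    (hvneg : ∀ i : ℤ, i < 0 → e i v = 0)
    (vseq : ℕ → M)
    (hseq0 : vseq 0 = v)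
    (hrec : ∀ k : ℕ, 1 ≤ k → k ≤ 2*p - 1 →
      vseq k = (((k : ℂ) * (2*(p : ℂ) - (k : ℂ)) * ((k : ℂ) - (p : ℂ) - t))⁻¹ * (2*t)) •
        ∑ j ∈ Finset.Icc 1 k,
          (((j : ℂ) - 1) * (2*t - 1) + 2*(k : ℂ) - 2*(p : ℂ) - 1) • e (j : ℤ) (vseq (k - j))) :
    e (-2) (vseq 1) = 0 ∧
    ∀ k : ℕ, 2 ≤ k → k ≤ 2*p - 1 →
      e (-2) (vseq k) = (-((p : ℂ) + 4 - (k : ℂ) + 5*t)) • vseq (k - 2) := by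
  subst hseq0
  have hvseq := vseq_weight_and_lowering ht (fun k hk1 hk => vseqDenom_ne_zero htg hk1 hk) hrel
    hv0 (hvneg (-1) (by norm_num)) (hvneg (-2) (by norm_num)) hrec
  refine ⟨by simpa using (hvseq 1 (by omega)).2.2, fun k hk2 hk => ?_⟩
  rw [(hvseq k hk).2.2, if_pos hk2, vseqLowerCoeff]
  congr 1
  push_cast
  ring
end
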